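/- Let h : ℝ → ℂ be an even integrable function. Then the function ζ(x) := ∫_{−∞}^∞ (sin(tx)/(it)) h(t/(2π)) dt is well-defined for each x ∈ ℝ (the integrand is bounded by |x|·|h(t/(2π))|), and the tempered distribution given by integration against ζ is the Fourier transform of the principal-value distribution pv(h(t)/t). -/

import Mathlib

/-!
Because `h` is even, `h t / t` is odd and the truncation set `{ε ≤ |t|}` is symmetric, so the
truncated integral against `𝓕 φ` equals that of `h t / t * (𝓕 φ t - 𝓕 φ (-t)) / 2`, and
`𝓕 φ t - 𝓕 φ (-t) = -2i ∫ sin (2π t y) φ y dy`. The bound `|sin (t x) / t| ≤ |x|` together with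
the integrability of `y φ y` makes `sin (2π t y) / (i t) * h t * φ y` integrable on `ℝ²`, so the
symmetrized integrand is integrable, the truncated integrals converge to its integral, and Fubini
plus the substitution `t ↦ 2π t` in the definition of `ζ` turns that integral into `∫ ζ φ`.
-/

open MeasureTheory Filter Topology
open scoped FourierTransform Real
open Complex (I)

theorem abs_sin_mul_div_le (t x : ℝ) : |Real.sin (t * x) / t| ≤ |x| := by
  rcases eq_or_ne t 0 with rfl | ht
  · simp
  · rw [abs_div, div_le_iff₀ (abs_pos.mpr ht), ← abs_mul, mul_comm x]
    exact Real.abs_sin_le_abs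

theorem norm_sin_mul_div_I_mul_le (t x : ℝ) : ‖(Real.sin (t * x) : ℂ) / (I * t)‖ ≤ |x| := by
  rw [norm_div, norm_mul, Complex.norm_I, one_mul, Complex.norm_real, Complex.norm_real,
    Real.norm_eq_abs, Real.norm_eq_abs, ← abs_div]
  exact abs_sin_mul_div_le t x

theorem MeasureTheory.Integrable.sin_mul_div_I_mul {g : ℝ → ℂ} (hg : Integrable g) (x : ℝ) :
    Integrable fun t => (Real.sin (t * x) : ℂ) / (I * t) * g t :=
  hg.bdd_mul (by fun_prop : Measurable _).aestronglyMeasurable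
    (.of_forall fun t => norm_sin_mul_div_I_mul_le t x)

theorem MeasureTheory.Integrable.sin_mul_div_I_mul_prod {g f : ℝ → ℂ} (hg : Integrable g)
    (hf : AEStronglyMeasurable f) (hf' : Integrable fun y => ‖y‖ * ‖f y‖) (c : ℝ) :
    Integrable (fun p : ℝ × ℝ => (Real.sin (p.1 * (c * p.2)) : ℂ) / (I * p.1) * g p.1 * f p.2)
      (volume.prod volume) := by
  have hmeas : AEStronglyMeasurable (fun p : ℝ × ℝ =>
      (Real.sin (p.1 * (c * p.2)) : ℂ) / (I * p.1) * g p.1 * f p.2) (volume.prod volume) :=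
    ((by fun_prop : Measurable _).aestronglyMeasurable.mul hg.aestronglyMeasurable.comp_fst).mul
      hf.comp_snd
  refine Integrable.mono' ((hg.norm.const_mul |c|).mul_prod hf') hmeas (.of_forall ?_)
  rintro ⟨t, y⟩
  calc ‖(Real.sin (t * (c * y)) : ℂ) / (I * t) * g t * f y‖
      ≤ |c * y| * ‖g t‖ * ‖f y‖ := by
        rw [norm_mul, norm_mul]; gcongr; exact norm_sin_mul_div_I_mul_le t (c * y)
    _ = |c| * ‖g t‖ * (‖y‖ * ‖f y‖) := by rw [abs_mul, Real.norm_eq_abs]; ring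

theorem integral_sin_mul_div_I_mul_comp_div {c : ℝ} (hc : 0 < c) (g : ℝ → ℂ) (x : ℝ) :
    ∫ t, (Real.sin (t * x) : ℂ) / (I * t) * g (t / c) =
      ∫ t, (Real.sin (t * (c * x)) : ℂ) / (I * t) * g t := by
  have hcomp := Measure.integral_comp_mul_left
    (fun t => (Real.sin (t * x) : ℂ) / (I * t) * g (t / c)) c
  rw [abs_of_pos (inv_pos.mpr hc), eq_inv_smul_iff₀ hc.ne'] at hcomp
  rw [← hcomp, ← integral_smul]
  congr 1 with t
  have hc' : (c : ℂ) ≠ 0 := mod_cast hc.ne'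
  rw [mul_div_cancel_left₀ _ hc.ne', Complex.real_smul, mul_comm t, mul_assoc]
  push_cast
  rcases eq_or_ne t 0 with rfl | ht
  · simp
  field_simp

theorem Real.fourier_sub_fourier_neg {f : ℝ → ℂ} (hf : Integrable f) (t : ℝ) :
    𝓕 f t - 𝓕 f (-t) = -2 * I * ∫ y, (Real.sin (t * (2 * π * y)) : ℂ) * f y := by
  have hmod : ∀ s : ℝ, Integrable fun y : ℝ => Complex.exp (↑(-2 * π * y * s) * I) • f y :=
    fun s => hf.bdd_mul (c := 1) (by fun_prop) (.of_forall fun y => by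
      rw [Complex.norm_exp_ofReal_mul_I])
  rw [Real.fourier_real_eq_integral_exp_smul, Real.fourier_real_eq_integral_exp_smul,
    ← integral_sub (hmod t) (hmod (-t)), ← integral_const_mul]
  congr 1 with y
  rw [smul_eq_mul, smul_eq_mul, ← sub_mul, ← mul_assoc]
  congr 1
  rw [Complex.ofReal_sin, Complex.exp_mul_I, Complex.exp_mul_I]
  push_cast
  rw [show (-2 * π * y * -t : ℂ) = t * (2 * π * y) by ring,
    show (-2 * π * y * t : ℂ) = -(t * (2 * π * y)) by ring, Complex.cos_neg, Complex.sin_neg]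
  ring

section Symmetric

variable {E : Type*} [NormedAddCommGroup E] {S : Set ℝ}

theorem setIntegral_comp_neg [NormedSpace ℝ E] (hS : -S = S) (g : ℝ → E) :
    ∫ t in S, g (-t) = ∫ t in S, g t := by
  conv_lhs => rw [← hS]
  exact (Measure.measurePreserving_neg volume).setIntegral_preimage_emb
    (Homeomorph.neg ℝ).measurableEmbedding g S

theorem integrableOn_comp_neg_iff (hS : -S = S) {g : ℝ → E} :
    IntegrableOn (fun t => g (-t)) S ↔ IntegrableOn g S := by
  conv_lhs => rw [← hS]
  exact (Measure.measurePreserving_neg volume).integrableOn_comp_preimage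
    (Homeomorph.neg ℝ).measurableEmbedding

end Symmetric

theorem setIntegral_odd_mul_eq {k F : ℝ → ℂ} (hk : ∀ t, k (-t) = -k t) {S : Set ℝ}
    (hS : -S = S) (hkF : IntegrableOn (fun t => k t * F t) S) :
    ∫ t in S, k t * F t = ∫ t in S, k t * ((F t - F (-t)) / 2) := by
  have hk' : ∀ t, k t * F (-t) = -(k (-t) * F (-t)) := fun t => by rw [hk, neg_mul, neg_neg]
  have hkF' : IntegrableOn (fun t => k t * F (-t)) S := by
    simp_rw [hk']
    exact ((integrableOn_comp_neg_iff hS).mpr hkF).neg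
  have hreflect : ∫ t in S, k t * F (-t) = -∫ t in S, k t * F t := by
    simp_rw [hk', integral_neg, setIntegral_comp_neg hS (fun t => k t * F t)]
  calc ∫ t in S, k t * F t = ((∫ t in S, k t * F t) - ∫ t in S, k t * F (-t)) / 2 := by
        rw [hreflect]; ring
    _ = _ := by
        rw [← integral_sub hkF hkF', ← integral_div]
        congr 1 with t
        ring

theorem MeasureTheory.Integrable.integrableOn_div_of_le_abs {g : ℝ → ℂ} (hg : Integrable g)
    {ε : ℝ} (hε : 0 < ε) : IntegrableOn (fun t => g t / t) {t | ε ≤ |t|} := by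
  have hS : MeasurableSet {t : ℝ | ε ≤ |t|} := measurableSet_le measurable_const measurable_abs
  have hmeas : AEStronglyMeasurable (fun t : ℝ => g t / t) :=
    (hg.aemeasurable.div (by fun_prop : Measurable fun t : ℝ => (t : ℂ)).aemeasurable)
      |>.aestronglyMeasurable
  refine Integrable.mono' (hg.norm.const_mul ε⁻¹).integrableOn hmeas.restrict
    ((ae_restrict_iff' hS).mpr (.of_forall fun t (ht : ε ≤ |t|) => ?_))
  rw [norm_div, Complex.norm_real, Real.norm_eq_abs, div_eq_inv_mul]
  gcongr

theorem tendsto_setIntegral_le_abs {E : Type*} [NormedAddCommGroup E] [NormedSpace ℝ E]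
    {f : ℝ → E} (hf : Integrable f) :
    Tendsto (fun ε => ∫ t in {t | ε ≤ |t|}, f t) (𝓝[>] 0) (𝓝 (∫ t, f t)) := by
  have hS : ∀ ε : ℝ, MeasurableSet {t : ℝ | ε ≤ |t|} := fun ε =>
    measurableSet_le measurable_const measurable_abs
  have hcompl : ∀ ε : ℝ, {t : ℝ | ε ≤ |t|}ᶜ = Metric.ball 0 ε := fun ε => by ext t; simp
  have hvol : Tendsto (fun ε : ℝ => volume {t : ℝ | ε ≤ |t|}ᶜ) (𝓝[>] 0) (𝓝 0) := by
    simp only [hcompl, Real.volume_ball]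
    exact ((ENNReal.continuous_ofReal.comp (continuous_const_mul 2)).tendsto' 0 0
      (by simp)).mono_left nhdsWithin_le_nhds
  have hlim := (hf.tendsto_setIntegral_nhds_zero hvol).const_sub (∫ t, f t)
  rw [sub_zero] at hlim
  refine hlim.congr fun ε => ?_
  rw [sub_eq_iff_eq_add, integral_add_compl (hS ε) hf]

theorem stmt9 (h : ℝ → ℂ) (hint : Integrable h) (heven : ∀ t, h (-t) = h t)
    (ζ : ℝ → ℂ)
    (hζ : ∀ x : ℝ, ζ x =
      ∫ t : ℝ, ((Real.sin (t * x) : ℂ) / (Complex.I * t)) * h (t / (2 * Real.pi))) :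
    (∀ x : ℝ, Integrable
        (fun t : ℝ => ((Real.sin (t * x) : ℂ) / (Complex.I * t)) * h (t / (2 * Real.pi)))) ∧
    (∀ φ : SchwartzMap ℝ ℂ,
      Filter.Tendsto
        (fun ε : ℝ => ∫ t in {t : ℝ | ε ≤ |t|}, (h t / t) * 𝓕 (fun y : ℝ => φ y) t)
        (nhdsWithin 0 (Set.Ioi 0)) (nhds (∫ x, ζ x * φ x))) := by
  have hπ : 0 < 2 * π := by positivity
  refine ⟨fun x => (hint.comp_div hπ.ne').sin_mul_div_I_mul x, fun φ => ?_⟩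
  set K : ℝ → ℝ → ℂ := fun t y => (Real.sin (t * (2 * π * y)) : ℂ) / (I * t) * h t * φ y
  have hK : Integrable (Function.uncurry K) (volume.prod volume) :=
    hint.sin_mul_div_I_mul_prod φ.continuous.aestronglyMeasurable
      (by simpa using φ.integrable_pow_mul volume 1) (2 * π)
  have hζφ : ∀ y, ζ y * φ y = ∫ t, K t y := fun y => by
    rw [hζ, integral_sin_mul_div_I_mul_comp_div hπ, ← integral_mul_const]
  have hF : 𝓕 (fun y : ℝ => φ y) = 𝓕 φ := (SchwartzMap.fourier_coe φ).symm
  have hsym : ∀ t, ∫ y, K t y = h t / t * ((𝓕 φ t - 𝓕 φ (-t)) / 2) := fun t => by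
    rw [← hF, Real.fourier_sub_fourier_neg φ.integrable, ← integral_const_mul, ← integral_div,
      ← integral_const_mul]
    congr 1 with y
    simp only [K, div_eq_mul_inv, mul_inv, Complex.inv_I]
    ring
  have hodd : ∀ t : ℝ, h (-t) / ((-t : ℝ) : ℂ) = -(h t / t) := fun t => by
    rw [heven, Complex.ofReal_neg, div_neg]
  simp_rw [hζφ, hF, ← integral_integral_swap hK]
  refine (tendsto_setIntegral_le_abs hK.integral_prod_left).congr' ?_
  filter_upwards [self_mem_nhdsWithin] with ε (hε : 0 < ε)
  rw [setIntegral_odd_mul_eq hodd (by ext; simp) ((hint.integrableOn_div_of_le_abs hε).mul_bdd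
    (𝓕 φ).continuous.aestronglyMeasurable (.of_forall fun t => (𝓕 φ).norm_le_seminorm ℝ t))]
  simp only [Function.uncurry_apply_pair, hsym]
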